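/- arXiv:1305.3033 — 2 statements merged into one kernel-verified Lean document; each statement's English description precedes it below -/
import Mathlib

section
/- Let (u₁, …, uₙ) be a basis of ℝⁿ. Then there exists u ∈ ℝⁿ such that the additive subgroup ℤu₁ + ℤu₂ + ⋯ + ℤuₙ + ℤu is dense in ℝⁿ. -/
/-!
Take `u = ∑ αⁱ⁺¹ • bᵢ` with `α` transcendental (a Liouville number). A closed subgroup `K ≠ E` of a
finite-dimensional real space takes integer values under some nonzero functional: split off its
lineality space `V`, the largest subspace contained in `K`. In a complement `W` of `V`, the
subgroup `K ∩ W` contains no line, hence is discrete (short nonzero vectors of `K` would have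
multiples filling a line), so it either lies in a hyperplane or is a full lattice of `W`, whose
coordinate functionals are integral. Such a functional, integral on the closure of our subgroup,
takes integer values `kᵢ` on `bᵢ` and `m` on `u`; then `∑ kᵢ αⁱ⁺¹ = m`, and transcendence of `α`
forces all `kᵢ = 0`, i.e. the functional vanishes.
-/

open Module Filter Topology Submodule Polynomial

theorem Transcendental.linearIndependent_pow {R A : Type*} [CommRing R] [CommRing A] [Algebra R A]
    {x : A} (hx : Transcendental R x) : LinearIndependent R (fun i : ℕ => x ^ i) := by
  have key := (linearIndependent_powers_iff_aeval (Algebra.lmul R A x) 1).mpr fun p hp => by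
    rw [aeval_algHom_apply (Algebra.lmul R A)] at hp
    exact (transcendental_iff.mp hx) p (by simpa using hp)
  have hpow : (fun i : ℕ => (Algebra.lmul R A x ^ i) 1) = fun i => x ^ i := by
    ext i
    rw [← map_pow]
    simp
  rwa [hpow] at key

theorem tendsto_floor_div_mul {ι : Type*} {l : Filter ι} {r : ι → ℝ} (hr : ∀ i, 0 < r i)
    (hlim : Tendsto r l (𝓝 0)) (t : ℝ) : Tendsto (fun i => (⌊t / r i⌋ : ℝ) * r i) l (𝓝 t) := by
  have hlow : Tendsto (fun i => t - r i) l (𝓝 t) := by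
    simpa using tendsto_const_nhds.sub hlim
  refine tendsto_of_tendsto_of_tendsto_of_le_of_le hlow tendsto_const_nhds (fun i => ?_)
    (fun i => ?_)
  · have := mul_lt_mul_of_pos_right (Int.sub_one_lt_floor (t / r i)) (hr i)
    rw [sub_one_mul, div_mul_cancel₀ _ (hr i).ne'] at this
    linarith
  · simpa [div_mul_cancel₀ _ (hr i).ne'] using
      mul_le_mul_of_nonneg_right (Int.floor_le (t / r i)) (hr i).le

namespace AddSubgroup

variable {E : Type*}

def linealitySpace (R : Type*) [Semiring R] [AddCommGroup E] [Module R E] (K : AddSubgroup E) :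
    Submodule R E where
  carrier := {v | ∀ t : R, t • v ∈ K}
  add_mem' hv hw t := by
    rw [smul_add]
    exact K.add_mem (hv t) (hw t)
  zero_mem' t := by
    rw [smul_zero]
    exact K.zero_mem
  smul_mem' c v hv t := by
    rw [smul_smul]
    exact hv _

theorem exists_ne_zero_norm_lt_of_not_discreteTopology [SeminormedAddCommGroup E]
    {K : AddSubgroup E} (hK : ¬ DiscreteTopology K) {ε : ℝ} (hε : 0 < ε) :
    ∃ x ∈ K, x ≠ 0 ∧ ‖x‖ < ε := by
  by_contra! h
  exact hK (.of_forall_le_norm hε fun x hx => h x x.2 (by simpa using hx))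

theorem linealitySpace_ne_bot_of_not_discreteTopology [NormedAddCommGroup E] [NormedSpace ℝ E]
    [ProperSpace E] {K : AddSubgroup E} (hK : IsClosed (K : Set E)) (hK' : ¬ DiscreteTopology K) :
    K.linealitySpace ℝ ≠ ⊥ := by
  choose x hxK hx0 hxε using fun k : ℕ =>
    exists_ne_zero_norm_lt_of_not_discreteTopology hK' (Nat.one_div_pos_of_nat (n := k))
  have hxpos : ∀ k, 0 < ‖x k‖ := fun k => norm_pos_iff.mpr (hx0 k)
  have hxlim : Tendsto (fun k => ‖x k‖) atTop (𝓝 0) :=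
    squeeze_zero (fun k => (hxpos k).le) (fun k => (hxε k).le)
      tendsto_one_div_add_atTop_nhds_zero_nat
  -- a limit direction `e` of the `x k`; the multiples of `x k` fill the line `ℝ e` ever more finely
  obtain ⟨e, he, φ, hφ, hdir⟩ := (isCompact_sphere (0 : E) 1).tendsto_subseq
    (x := fun k => ‖x k‖⁻¹ • x k) fun k => by simp [norm_smul, (hxpos k).ne']
  refine (Submodule.ne_bot_iff _).mpr ⟨e, fun t => ?_, ne_zero_of_mem_unit_sphere ⟨e, he⟩⟩
  have hlim : Tendsto (fun k => ⌊t / ‖x (φ k)‖⌋ • x (φ k)) atTop (𝓝 (t • e)) := by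
    convert (tendsto_floor_div_mul (fun k => hxpos (φ k)) (hxlim.comp hφ.tendsto_atTop) t).smul
      hdir using 2 with k
    simp [smul_smul, (hxpos (φ k)).ne', ← Int.cast_smul_eq_zsmul ℝ]
  exact hK.mem_of_tendsto hlim (Eventually.of_forall fun k => zsmul_mem (hxK _) _)

variable [NormedAddCommGroup E] [NormedSpace ℝ E] [FiniteDimensional ℝ E]

theorem exists_dual_ne_zero_intCast_of_discreteTopology (K : AddSubgroup E) [DiscreteTopology K]
    (hK : K ≠ ⊤) : ∃ f : Dual ℝ E, f ≠ 0 ∧ ∀ x ∈ K, ∃ m : ℤ, f x = m := by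
  let L : Submodule ℤ E := K.toIntSubmodule
  have : DiscreteTopology L := ‹DiscreteTopology K›
  by_cases hspan : span ℝ (L : Set E) = ⊤
  · have : Nontrivial E := by
      by_contra! h
      exact hK (Subsingleton.elim _ _)
    have : IsZLattice ℝ L := ⟨hspan⟩
    have : Module.Free ℤ L := ZLattice.module_free ℝ L
    let b₀ := Free.chooseBasis ℤ L
    let b := b₀.ofZLatticeBasis ℝ L
    obtain ⟨i⟩ := b.index_nonempty
    refine ⟨b.coord i, fun h => by simpa using LinearMap.congr_fun h (b i),
      fun x hx => ⟨b₀.repr ⟨x, hx⟩ i, ?_⟩⟩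
    exact b₀.ofZLatticeBasis_repr_apply ℝ L ⟨x, hx⟩ i
  · obtain ⟨f, hf, hfK⟩ := exists_dual_map_eq_bot_of_lt_top (lt_top_iff_ne_top.mpr hspan)
      inferInstance
    refine ⟨f, hf, fun x hx => ⟨0, ?_⟩⟩
    have : f x ∈ (span ℝ (L : Set E)).map f := Submodule.mem_map_of_mem (subset_span hx)
    simpa [hfK] using this

theorem exists_dual_ne_zero_intCast_of_isClosed (K : AddSubgroup E) (hK : IsClosed (K : Set E))
    (hne : K ≠ ⊤) : ∃ f : Dual ℝ E, f ≠ 0 ∧ ∀ x ∈ K, ∃ m : ℤ, f x = m := by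
  let V := K.linealitySpace ℝ
  have hVK : ∀ v ∈ V, v ∈ K := fun v hv => by simpa using hv 1
  obtain ⟨W, hVW⟩ := V.exists_isCompl
  let π := W.projectionOnto V hVW.symm
  have hπK : ∀ x ∈ K, (π x : E) ∈ K := fun x hx => by
    simpa [π] using K.sub_mem hx (hVK _ (W.sub_projection_mem hVW.symm x))
  -- `K ∩ W` is a complement of `V` in `K`, and it contains no line
  let KW : AddSubgroup W := K.comap W.subtype.toAddMonoidHom
  have hKW : KW ≠ ⊤ := fun h => hne <| eq_top_iff.mpr fun x _ => by
    simpa [π] using K.add_mem (hVK _ (W.sub_projection_mem hVW.symm x))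
      (show π x ∈ KW from h ▸ trivial)
  have : DiscreteTopology KW := by
    by_contra h
    obtain ⟨e, he, he0⟩ := (Submodule.ne_bot_iff _).mp
      (linealitySpace_ne_bot_of_not_discreteTopology (hK.preimage continuous_subtype_val) h)
    have heV : (e : E) ∈ V := he
    exact he0 (Subtype.ext (hVW.disjoint.le_bot ⟨heV, e.2⟩))
  obtain ⟨g, hg, hgK⟩ := KW.exists_dual_ne_zero_intCast_of_discreteTopology hKW
  obtain ⟨w, hw⟩ := DFunLike.ne_iff.mp hg
  exact ⟨g ∘ₗ π, DFunLike.ne_iff.mpr ⟨(w : E), by simpa [π] using hw⟩,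
    fun x hx => hgK (π x) (hπK x hx)⟩

theorem dense_of_forall_dual_intCast_imp_eq_zero (H : AddSubgroup E)
    (h : ∀ f : Dual ℝ E, (∀ x ∈ H, ∃ m : ℤ, f x = m) → f = 0) : Dense (H : Set E) := by
  by_contra hd
  have hne : H.topologicalClosure ≠ ⊤ := fun htop => hd <| by
    simpa [dense_iff_closure_eq] using congrArg ((↑) : AddSubgroup E → Set E) htop
  obtain ⟨f, hf, hfK⟩ :=
    H.topologicalClosure.exists_dual_ne_zero_intCast_of_isClosed H.isClosed_topologicalClosure hne
  exact hf (h f fun x hx => hfK x (H.le_topologicalClosure hx))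

end AddSubgroup

theorem dense_iSup_zmultiples_basis_sup_zmultiples_sum_pow {E : Type*} [NormedAddCommGroup E]
    [NormedSpace ℝ E] [FiniteDimensional ℝ E] {n : ℕ} (b : Basis (Fin n) ℝ E) {α : ℝ}
    (hα : Transcendental ℤ α) :
    Dense (((⨆ i, AddSubgroup.zmultiples (b i)) ⊔
      AddSubgroup.zmultiples (∑ i : Fin n, α ^ ((i : ℕ) + 1) • b i) : AddSubgroup E) : Set E) := by
  refine AddSubgroup.dense_of_forall_dual_intCast_imp_eq_zero _ fun f hf => ?_
  choose k hk using fun i => hf (b i) <| AddSubgroup.mem_sup_left <|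
    AddSubgroup.mem_iSup_of_mem i (AddSubgroup.mem_zmultiples _)
  obtain ⟨m, hm⟩ := hf _ (AddSubgroup.mem_sup_right (AddSubgroup.mem_zmultiples _))
  -- an integer relation `-m + ∑ kᵢ αⁱ⁺¹ = 0`, which transcendence forces to be trivial
  have hrel : ∑ j, (Fin.cons (-m) k : Fin (n + 1) → ℤ) j • α ^ (j : ℕ) = 0 := by
    simp [Fin.sum_univ_succ, ← hm, hk, mul_comm]
  have hk0 := Fintype.linearIndependent_iff.mp
    (hα.linearIndependent_pow.comp Fin.val Fin.val_injective) _ hrel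
  exact b.ext fun i => by simpa [hk] using hk0 i.succ

/-- Proposition 3.4: any basis `(u₁, …, uₙ)` of `ℝⁿ` can be completed by a single
vector `u` so that `ℤu₁ + ⋯ + ℤuₙ + ℤu` is dense in `ℝⁿ`. -/
theorem exists_dense_lattice_add_zmultiples (n : ℕ) (b : Module.Basis (Fin n) ℝ (Fin n → ℝ)) :
    ∃ u : Fin n → ℝ,
      Dense (((⨆ i, AddSubgroup.zmultiples (b i)) ⊔ AddSubgroup.zmultiples u :
        AddSubgroup (Fin n → ℝ)) : Set (Fin n → ℝ)) :=
  ⟨_, dense_iSup_zmultiples_basis_sup_zmultiples_sum_pow b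
    (transcendental_liouvilleNumber le_rfl)⟩
end

section
/- Let E, E' be ℝ-linear subspaces of ℝⁿ and D, D' discrete additive subgroups of ℝⁿ with E' ∩ span_ℝ(D') = {0}. Let f₁ : ℝⁿ → ℝⁿ be an ℝ-linear map with f₁(E) ⊆ E', and let f₂ : D → ℝⁿ be a homomorphism of additive groups with f₂(D) ⊆ D'. Then the set {f₁(x) + f₂(y) : x ∈ E, y ∈ D} is closed in ℝⁿ. -/
/-!
Put `V = f₁(E)` and `Γ = f₂(D)`. Then `Γ ⊆ D'` is discrete, hence closed, and `V` meets
`span Γ ⊆ span D'` only in `0`. So `span Γ` extends to a complement `W` of `V`, and the set in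
question, `V + Γ`, is the preimage of `Γ` under the (continuous) projection onto `W` along `V`.
-/

open scoped Pointwise

namespace Submodule

variable {R E : Type*} [Ring R] [AddCommGroup E] [Module R E]

theorem coe_add_eq_preimage_projection {p q : Submodule R E} (hpq : IsCompl p q) {S : Set E}
    (hS : S ⊆ p) : (q : Set E) + S = p.projection q hpq ⁻¹' S := by
  ext z
  constructor
  · rintro ⟨v, hv, s, hs, rfl⟩
    simpa [projection_apply_of_mem_right hpq hv, projection_apply_of_mem_left hpq (hS hs)]
  · intro hz
    exact ⟨z - p.projection q hpq z, sub_projection_mem hpq z, _, hz, sub_add_cancel _ _⟩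

theorem isClosed_coe_add_of_disjoint_span {𝕜 F : Type*} [NontriviallyNormedField 𝕜]
    [CompleteSpace 𝕜] [AddCommGroup F] [Module 𝕜 F] [TopologicalSpace F]
    [IsTopologicalAddGroup F] [ContinuousSMul 𝕜 F] [T2Space F] [FiniteDimensional 𝕜 F]
    (V : Submodule 𝕜 F) {S : Set F} (hS : IsClosed S) (hVS : Disjoint V (span 𝕜 S)) :
    IsClosed ((V : Set F) + S) := by
  obtain ⟨W, hSW, hWV⟩ := hVS.symm.exists_isCompl
  rw [coe_add_eq_preimage_projection hWV (subset_span.trans hSW)]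
  exact hS.preimage (LinearMap.continuous_of_finiteDimensional _)

end Submodule

theorem isClosed_image_hom_closed_additive_group_general (n : ℕ)
    (E E' : Submodule ℝ (Fin n → ℝ)) (D D' : AddSubgroup (Fin n → ℝ))
    (hD' : DiscreteTopology D')
    (hED' : E' ⊓ Submodule.span ℝ (D' : Set (Fin n → ℝ)) = ⊥)
    (f₁ : (Fin n → ℝ) →ₗ[ℝ] (Fin n → ℝ)) (hf₁ : ∀ x ∈ E, f₁ x ∈ E')
    (f₂ : D →+ (Fin n → ℝ)) (hf₂ : ∀ y : D, f₂ y ∈ D') :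
    IsClosed {z : Fin n → ℝ | ∃ x ∈ E, ∃ y : D, z = f₁ x + f₂ y} := by
  have hrange : (f₂.range : Set (Fin n → ℝ)) ⊆ D' := by
    rintro _ ⟨y, rfl⟩
    exact hf₂ y
  have : DiscreteTopology f₂.range := hD'.of_subset hrange
  have hdisj : Disjoint (E.map f₁) (Submodule.span ℝ (f₂.range : Set (Fin n → ℝ))) :=
    (disjoint_iff.mpr hED').mono (Submodule.map_le_iff_le_comap.mpr hf₁)
      (Submodule.span_mono hrange)
  have hset : {z : Fin n → ℝ | ∃ x ∈ E, ∃ y : D, z = f₁ x + f₂ y}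
      = (E.map f₁ : Set (Fin n → ℝ)) + (f₂.range : Set (Fin n → ℝ)) := by
    ext z
    simp [Set.mem_add, eq_comm]
  rw [hset]
  exact (E.map f₁).isClosed_coe_add_of_disjoint_span AddSubgroup.isClosed_of_discrete hdisj

/-- Theorem 1.8(iv) / Lemma 4.1(i): the image `{f₁(x) + f₂(y) : x ∈ E, y ∈ D}`
of a homomorphism of closed additive groups is a closed subset of `ℝⁿ`. -/
theorem isClosed_image_hom_closed_additive_group (n : ℕ)
    (E E' : Submodule ℝ (Fin n → ℝ)) (D D' : AddSubgroup (Fin n → ℝ))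
    (hD : DiscreteTopology D) (hD' : DiscreteTopology D')
    (hED' : E' ⊓ Submodule.span ℝ (D' : Set (Fin n → ℝ)) = ⊥)
    (f₁ : (Fin n → ℝ) →ₗ[ℝ] (Fin n → ℝ)) (hf₁ : ∀ x ∈ E, f₁ x ∈ E')
    (f₂ : D →+ (Fin n → ℝ)) (hf₂ : ∀ y : D, f₂ y ∈ D') :
    IsClosed {z : Fin n → ℝ | ∃ x ∈ E, ∃ y : D, z = f₁ x + f₂ y} :=
  isClosed_image_hom_closed_additive_group_general n E E' D D' hD' hED' f₁ hf₁ f₂ hf₂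
end
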